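/- Let E be a real inner product space, let u, u₁, …, uₙ be elements of E, and let σ > 0. Let K be the n×n real matrix with entries K i j = ⟪uᵢ, uⱼ⟫ and let κ ∈ ℝⁿ be the vector with entries κ i = ⟪uᵢ, u⟫. Then the matrix K + σ²·I is invertible, and, defining the weight vector w = (K + σ²·I)⁻¹ κ, one has the identity ‖(∑ᵢ wᵢ • uᵢ) − u‖² = ⟪u, u⟫ − κᵀ (K + σ²·I)⁻¹ κ − σ² ∑ᵢ wᵢ². -/

import Mathlib

/-!
`K + σ²I` is positive definite because the Gram matrix `K` is positive semidefinite. For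
`x = ∑ wᵢ • uᵢ` one has `‖x‖² = wᵀ K w` and `⟪x, u⟫ = wᵀ κ`; the normal equations
`(K + σ²I) w = κ` turn `wᵀ K w` into `wᵀ κ - σ² wᵀ w`, and expanding `‖x - u‖²` gives the identity.
-/

open Matrix
open scoped RealInnerProductSpace

section GramRegularization

variable {E ι : Type*} [NormedAddCommGroup E] [InnerProductSpace ℝ E] [Fintype ι]

lemma dotProduct_gram_mulVec_self (v : ι → E) (x : ι → ℝ) :
    x ⬝ᵥ (gram ℝ v *ᵥ x) = ‖∑ i, x i • v i‖ ^ 2 := by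
  rw [← real_inner_self_eq_norm_sq, ← star_dotProduct_gram_mulVec, star_trivial]

lemma inner_sum_smul_left (v : ι → E) (x : ι → ℝ) (u : E) :
    ⟪∑ i, x i • v i, u⟫ = x ⬝ᵥ fun i ↦ ⟪v i, u⟫ := by
  simp only [sum_inner, real_inner_smul_left, dotProduct]

lemma posDef_gram_add_smul_one [DecidableEq ι] (v : ι → E) {c : ℝ} (hc : 0 < c) :
    (gram ℝ v + c • 1).PosDef :=
  PosDef.posSemidef_add (posSemidef_gram ℝ v) (PosDef.one.smul hc)

lemma norm_sum_smul_sub_sq_of_gram_add_smul_one_mulVec [DecidableEq ι] (v : ι → E) (u : E)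
    (c : ℝ) {w : ι → ℝ} (hw : (gram ℝ v + c • 1) *ᵥ w = fun i ↦ ⟪v i, u⟫) :
    ‖∑ i, w i • v i - u‖ ^ 2 = ⟪u, u⟫ - (fun i ↦ ⟪v i, u⟫) ⬝ᵥ w - c * (w ⬝ᵥ w) := by
  have hGw : gram ℝ v *ᵥ w = (fun i ↦ ⟪v i, u⟫) - c • w := by
    rw [← hw, add_mulVec, smul_mulVec, one_mulVec, add_sub_cancel_right]
  have hsq : ‖∑ i, w i • v i‖ ^ 2 = w ⬝ᵥ (fun i ↦ ⟪v i, u⟫) - c * (w ⬝ᵥ w) := by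
    rw [← dotProduct_gram_mulVec_self, hGw, dotProduct_sub, dotProduct_smul, smul_eq_mul]
  rw [norm_sub_sq_real, hsq, inner_sum_smul_left, ← real_inner_self_eq_norm_sq,
    dotProduct_comm w]
  ring

end GramRegularization

theorem stmt_0 {E : Type*} [NormedAddCommGroup E] [InnerProductSpace ℝ E]
    {n : ℕ} (u : E) (u' : Fin n → E) (σ : ℝ) (hσ : 0 < σ)
    (K : Matrix (Fin n) (Fin n) ℝ) (hK : ∀ i j, K i j = ⟪u' i, u' j⟫)
    (κ : Fin n → ℝ) (hκ : ∀ i, κ i = ⟪u' i, u⟫)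
    (w : Fin n → ℝ)
    (hw : w = (K + σ ^ 2 • (1 : Matrix (Fin n) (Fin n) ℝ))⁻¹ *ᵥ κ) :
    IsUnit (K + σ ^ 2 • (1 : Matrix (Fin n) (Fin n) ℝ)) ∧
      ‖(∑ i, w i • u' i) - u‖ ^ 2 =
        ⟪u, u⟫ - κ ⬝ᵥ ((K + σ ^ 2 • (1 : Matrix (Fin n) (Fin n) ℝ))⁻¹ *ᵥ κ)
          - σ ^ 2 * ∑ i, w i ^ 2 := by
  obtain rfl : K = gram ℝ u' := Matrix.ext hK
  obtain rfl : κ = fun i ↦ ⟪u' i, u⟫ := funext hκ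
  have hunit := (posDef_gram_add_smul_one u' (pow_pos hσ 2)).isUnit
  have hsolve : (gram ℝ u' + σ ^ 2 • 1) *ᵥ w = fun i ↦ ⟪u' i, u⟫ := by
    rw [hw, mulVec_mulVec, mul_nonsing_inv _ ((isUnit_iff_isUnit_det _).mp hunit), one_mulVec]
  refine ⟨hunit, ?_⟩
  rw [norm_sum_smul_sub_sq_of_gram_add_smul_one_mulVec u' u _ hsolve, ← hw]
  simp only [dotProduct, sq]
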